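/- In a gem (M, c), if {g1, g2} is a 2-edge cut both of whose edges are coloured yellow, then g1 and g2 lie in the same connected component of the spanning subgraph formed by the red and yellow edges, and g1 and g2 also lie in the same connected component of the spanning subgraph formed by the blue and yellow edges. (In the embedding represented by the gem, this says there is a red-yellow bigon C_v and a blue-yellow bigon A_f both containing g1 and g2, so the corresponding vertex v and face f form a bad vertex/face pair.) -/

import Mathlib

/-- The three colours used in a gem. -/
inductive Colour : Type
  | red | yellow | blue
deriving DecidableEq

/-- A proper edge colouring of a graph: two distinct edges sharing an endpoint
receive different colours. -/
def ProperEdgeColouring {V : Type*} {α : Type*} (G : SimpleGraph V) (c : Sym2 V → α) : Prop :=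
  ∀ e₁ ∈ G.edgeSet, ∀ e₂ ∈ G.edgeSet, e₁ ≠ e₂ → (∃ v, v ∈ e₁ ∧ v ∈ e₂) → c e₁ ≠ c e₂

/-- A cubic graph: every vertex has degree 3. -/
def IsCubic {V : Type*} (G : SimpleGraph V) : Prop :=
  ∀ v : V, (G.neighborSet v).ncard = 3

/-- The edge cut determined by a vertex set `S`: the set of edges of `G`
with exactly one endpoint in `S`. -/
def edgeCut {V : Type*} (G : SimpleGraph V) (S : Set V) : Set (Sym2 V) :=
  {e | ∃ u v, e = s(u, v) ∧ G.Adj u v ∧ u ∈ S ∧ v ∉ S}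

/-- The spanning subgraph of `G` formed by the edges coloured `x` or `y`. -/
def twoColourSubgraph {V : Type*} {α : Type*} (G : SimpleGraph V) (c : Sym2 V → α)
    (x y : α) : SimpleGraph V where
  Adj u v := G.Adj u v ∧ (c s(u, v) = x ∨ c s(u, v) = y)
  symm := by
    constructor
    intro u v h
    refine ⟨h.1.symm, ?_⟩
    rw [Sym2.eq_swap]
    exact h.2
  loopless := ⟨fun v h => G.loopless.irrefl v h.1⟩

/-- A gem: a connected cubic graph with a proper 3-edge-colouring (red, yellow,
blue) such that every connected component of the spanning subgraph formed by
the red and blue edges is a cycle of length 4 (equivalently, for a simple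
graph: that subgraph is 2-regular and each of its connected components has
exactly 4 vertices). -/
structure IsGem {V : Type*} (M : SimpleGraph V) (c : Sym2 V → Colour) : Prop where
  connected : M.Connected
  cubic : IsCubic M
  proper : ProperEdgeColouring M c
  rb_two_regular : ∀ v : V,
    ((twoColourSubgraph M c Colour.red Colour.blue).neighborSet v).ncard = 2
  rb_components_card4 : ∀ v : V,
    ((twoColourSubgraph M c Colour.red Colour.blue).connectedComponentMk v).supp.ncard = 4

/-! For `x ≠ yellow`, every vertex of a gem has exactly two neighbours in the `x`-yellow subgraph
`H`, since the three edges at a vertex carry the three colours. Let `T` be the set of vertices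
of `S` reachable in `H` from the inner end `u₁` of `g1`. The number of `H`-darts leaving `T` is
the degree sum over `T` minus the (even) number of darts inside `T`, hence even. A dart leaving
`T` leaves `S`, so it runs along `g1` or `g2`. If no end of `g2` were reachable from `u₁`,
exactly one dart, along `g1`, would leave `T`. -/

open Finset

theorem Finset.even_card_of_involution {α : Type*} {s : Finset α} (f : α → α)
    (hf : ∀ a ∈ s, f a ∈ s) (hff : ∀ a ∈ s, f (f a) = a) (hfa : ∀ a ∈ s, f a ≠ a) :
    Even #s := by
  have h : ∑ _a ∈ s, (1 : ZMod 2) = 0 :=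
    sum_involution (fun a _ => f a) (fun _ _ => by decide) (fun a ha _ => hfa a ha)
      hf hff
  rw [sum_const, nsmul_one, ZMod.natCast_eq_zero_iff] at h
  exact even_iff_two_dvd.2 h

namespace SimpleGraph

section Darts

variable {V : Type*} [Fintype V] [DecidableEq V] (H : SimpleGraph V) [DecidableRel H.Adj]

theorem card_darts_fst_mem (T : Finset V) :
    #{d : H.Dart | d.fst ∈ T} = ∑ v ∈ T, H.degree v := by
  rw [card_eq_sum_card_fiberwise (f := fun d : H.Dart => d.fst) (t := T) (by simp [Set.MapsTo])]
  refine sum_congr rfl fun v hv => ?_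
  rw [← dart_fst_fiber_card_eq_degree, filter_filter]
  congr 1
  ext d
  simp only [mem_filter, mem_univ, true_and, and_iff_right_iff_imp]
  rintro rfl
  exact hv

theorem even_card_darts_inside (T : Finset V) :
    Even #{d : H.Dart | d.fst ∈ T ∧ d.snd ∈ T} :=
  Finset.even_card_of_involution Dart.symm (by simp +contextual) (by simp)
    (fun d _ => d.symm_ne)

theorem even_card_darts_leaving (hdeg : ∀ v, Even (H.neighborSet v).ncard) (T : Finset V) :
    Even #{d : H.Dart | d.fst ∈ T ∧ d.snd ∉ T} := by
  have hsum : Even #{d : H.Dart | d.fst ∈ T} := by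
    rw [card_darts_fst_mem]
    refine even_sum _ fun v _ => ?_
    simpa [← card_neighborSet_eq_degree, Set.ncard_eq_toFinset_card'] using hdeg v
  rw [← card_filter_add_card_filter_not (p := fun d : H.Dart => d.snd ∈ T),
    filter_filter, filter_filter] at hsum
  exact (Nat.even_add.1 hsum).1 (H.even_card_darts_inside T)

end Darts

theorem reachable_of_even_degree_of_two_edge_cut {V : Type*} [Fintype V] {H : SimpleGraph V}
    (hdeg : ∀ v, Even (H.neighborSet v).ncard) {S : Set V} {u₁ v₁ u₂ v₂ : V}
    (hcut : ∀ ⦃u v⦄, H.Adj u v → u ∈ S → v ∉ S → s(u, v) = s(u₁, v₁) ∨ s(u, v) = s(u₂, v₂))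
    (h₁ : H.Adj u₁ v₁) (hu₁ : u₁ ∈ S) (hv₁ : v₁ ∉ S) : H.Reachable u₁ u₂ := by
  classical
  by_contra hu₂
  let T : Finset V := {w | w ∈ S ∧ H.Reachable u₁ w}
  have hleaving : ({d : H.Dart | d.fst ∈ T ∧ d.snd ∉ T} : Finset H.Dart) = {⟨(u₁, v₁), h₁⟩} := by
    ext ⟨⟨u, v⟩, huv⟩
    simp only [T, mem_filter, mem_univ, true_and, not_and, mem_singleton, Dart.mk.injEq,
      Prod.mk.injEq]
    constructor
    · rintro ⟨⟨hu, hr⟩, hv⟩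
      have hr' : H.Reachable u₁ v := hr.trans huv.reachable
      rcases hcut huv hu (fun h => hv h hr') with h | h
      · rcases Sym2.eq_iff.1 h with h | ⟨rfl, -⟩
        · exact h
        · exact absurd hu hv₁
      · rcases Sym2.mem_iff.1 (h ▸ Sym2.mem_mk_left u₂ v₂) with rfl | rfl
        · exact absurd hr hu₂
        · exact absurd hr' hu₂
    · rintro ⟨rfl, rfl⟩
      exact ⟨⟨hu₁, .rfl⟩, fun h => absurd h hv₁⟩
  have := H.even_card_darts_leaving hdeg T
  rw [hleaving, card_singleton] at this
  exact Nat.not_even_one this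

end SimpleGraph

instance : Fintype Colour :=
  ⟨{.red, .yellow, .blue}, fun x => by cases x <;> simp⟩

section Gem

variable {V : Type*}

theorem ProperEdgeColouring.injOn_neighborSet {α : Type*} {G : SimpleGraph V}
    {c : Sym2 V → α} (hc : ProperEdgeColouring G c) (v : V) :
    Set.InjOn (fun w => c s(v, w)) (G.neighborSet v) := by
  intro w₁ hw₁ w₂ hw₂ hcw
  by_contra hne
  refine hc _ hw₁ _ hw₂ ?_ ⟨v, Sym2.mem_mk_left _ _, Sym2.mem_mk_left _ _⟩ hcw
  rwa [Ne, Sym2.congr_right]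

theorem ncard_neighborSet_twoColourSubgraph {G : SimpleGraph V} {c : Sym2 V → Colour}
    (hG : IsCubic G) (hc : ProperEdgeColouring G c) {x y : Colour} (hxy : x ≠ y) (v : V) :
    ((twoColourSubgraph G c x y).neighborSet v).ncard = 2 := by
  have hinj := hc.injOn_neighborSet v
  have hsurj : (fun w => c s(v, w)) '' G.neighborSet v = Set.univ :=
    Set.eq_of_subset_of_ncard_le (Set.subset_univ _)
      (by rw [hinj.ncard_image, hG v, Set.ncard_univ, Nat.card_eq_fintype_card]; rfl)
  have hnbr : (twoColourSubgraph G c x y).neighborSet v =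
      G.neighborSet v ∩ (fun w => c s(v, w)) ⁻¹' {x, y} := rfl
  rw [hnbr, ← (hinj.mono Set.inter_subset_left).ncard_image,
    Set.image_inter_preimage, hsurj, Set.univ_inter, Set.ncard_pair hxy]

theorem reachable_twoColourSubgraph_of_edgeCut_eq_pair [Fintype V] {G : SimpleGraph V}
    {c : Sym2 V → Colour} (hG : IsCubic G) (hc : ProperEdgeColouring G c) {x y : Colour}
    (hxy : x ≠ y) {S : Set V} {u₁ v₁ u₂ v₂ : V}
    (hcut : edgeCut G S = {s(u₁, v₁), s(u₂, v₂)}) (h₁ : (twoColourSubgraph G c x y).Adj u₁ v₁)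
    (hu₁ : u₁ ∈ S) (hv₁ : v₁ ∉ S) : (twoColourSubgraph G c x y).Reachable u₁ u₂ := by
  refine SimpleGraph.reachable_of_even_degree_of_two_edge_cut (v₂ := v₂) (fun v => ?_) ?_
    h₁ hu₁ hv₁
  · rw [ncard_neighborSet_twoColourSubgraph hG hc hxy]
    exact even_two
  · intro u v huv hu hv
    have h : s(u, v) ∈ edgeCut G S := ⟨u, v, rfl, huv.1, hu, hv⟩
    rwa [hcut] at h

end Gem

theorem yellow_two_edge_cut_bad_pair_general {V : Type*} [Fintype V]
    (M : SimpleGraph V) (c : Sym2 V → Colour) (hgem : IsGem M c)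
    (S : Set V)
    (g1 g2 : Sym2 V) (hcut : edgeCut M S = {g1, g2})
    (hy1 : c g1 = Colour.yellow) (hy2 : c g2 = Colour.yellow) :
    (g1 ∈ (twoColourSubgraph M c Colour.red Colour.yellow).edgeSet ∧
     g2 ∈ (twoColourSubgraph M c Colour.red Colour.yellow).edgeSet ∧
     ∃ u v, u ∈ g1 ∧ v ∈ g2 ∧
       (twoColourSubgraph M c Colour.red Colour.yellow).Reachable u v) ∧
    (g1 ∈ (twoColourSubgraph M c Colour.blue Colour.yellow).edgeSet ∧
     g2 ∈ (twoColourSubgraph M c Colour.blue Colour.yellow).edgeSet ∧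
     ∃ u v, u ∈ g1 ∧ v ∈ g2 ∧
       (twoColourSubgraph M c Colour.blue Colour.yellow).Reachable u v) := by
  obtain ⟨u₁, v₁, rfl, hadj₁, hu₁, hv₁⟩ : g1 ∈ edgeCut M S := hcut ▸ Set.mem_insert _ _
  obtain ⟨u₂, v₂, rfl, hadj₂, -, -⟩ : g2 ∈ edgeCut M S := hcut ▸ Set.mem_insert_of_mem _ rfl
  have bigon (x : Colour) (hx : x ≠ Colour.yellow) :
      s(u₁, v₁) ∈ (twoColourSubgraph M c x Colour.yellow).edgeSet ∧
      s(u₂, v₂) ∈ (twoColourSubgraph M c x Colour.yellow).edgeSet ∧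
      ∃ u v, u ∈ s(u₁, v₁) ∧ v ∈ s(u₂, v₂) ∧
        (twoColourSubgraph M c x Colour.yellow).Reachable u v := by
    have h₁ : (twoColourSubgraph M c x Colour.yellow).Adj u₁ v₁ := ⟨hadj₁, .inr hy1⟩
    refine ⟨h₁, ⟨hadj₂, .inr hy2⟩, u₁, u₂, Sym2.mem_mk_left _ _, Sym2.mem_mk_left _ _, ?_⟩
    exact reachable_twoColourSubgraph_of_edgeCut_eq_pair hgem.cubic hgem.proper hx hcut h₁ hu₁ hv₁
  exact ⟨bigon .red (by decide), bigon .blue (by decide)⟩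

/-- In a gem, if `{g1, g2}` is a yellow 2-edge cut, then `g1` and `g2` lie in
the same connected component of the red-yellow spanning subgraph (a red-yellow
bigon `C_v`) and in the same connected component of the blue-yellow spanning
subgraph (a blue-yellow bigon `A_f`); thus the corresponding vertex/face pair
of the represented embedding is bad. -/
theorem yellow_two_edge_cut_bad_pair {V : Type*} [Fintype V]
    (M : SimpleGraph V) (c : Sym2 V → Colour) (hgem : IsGem M c)
    (S : Set V) (hS : S.Nonempty) (hSc : Sᶜ.Nonempty)
    (g1 g2 : Sym2 V) (hne : g1 ≠ g2) (hcut : edgeCut M S = {g1, g2})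
    (hy1 : c g1 = Colour.yellow) (hy2 : c g2 = Colour.yellow) :
    (g1 ∈ (twoColourSubgraph M c Colour.red Colour.yellow).edgeSet ∧
     g2 ∈ (twoColourSubgraph M c Colour.red Colour.yellow).edgeSet ∧
     ∃ u v, u ∈ g1 ∧ v ∈ g2 ∧
       (twoColourSubgraph M c Colour.red Colour.yellow).Reachable u v) ∧
    (g1 ∈ (twoColourSubgraph M c Colour.blue Colour.yellow).edgeSet ∧
     g2 ∈ (twoColourSubgraph M c Colour.blue Colour.yellow).edgeSet ∧
     ∃ u v, u ∈ g1 ∧ v ∈ g2 ∧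
       (twoColourSubgraph M c Colour.blue Colour.yellow).Reachable u v) :=
  yellow_two_edge_cut_bad_pair_general M c hgem S g1 g2 hcut hy1 hy2
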